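/- arXiv:math/0301362 — 4 statements merged into one kernel-verified Lean document; each statement's English description precedes it below -/
import Mathlib

section
/- Let Λ = Λ_N(ℂ) be the exterior algebra of the free module ℂ^N over ℂ, with body map π : Λ → ℂ. Let m, n with m + n ≥ 1, let λ : Fin (m+n) → ℂ be injective, and let μ : Fin (m+n) → Λ satisfy π(μⱼ) = 0 for all j. If for every k = 1, …, m+n one has Σ_{j < m} ((λⱼ·1) + μⱼ)ᵏ − Σ_{m ≤ j} ((λⱼ·1) + μⱼ)ᵏ = (Σ_{j < m} λⱼᵏ − Σ_{m ≤ j} λⱼᵏ)·1 in Λ, then μⱼ = 0 for all j. -/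
/-!
Elements with zero body form a nilpotent ideal `I` of the exterior algebra: `I` consists of
elements of exterior degree `≥ 1`, so `I ^ (N + 1) = 0`. If all `μⱼ` lie in a left ideal `J`,
then `(λⱼ + μⱼ) ^ (k + 1) ≡ λⱼ ^ (k + 1) + (k + 1) λⱼ ^ k μⱼ` modulo `J²`, so the power-sum
hypotheses give `∑ⱼ λⱼ ^ k (εⱼ μⱼ) ∈ J²` for `k < m + n`, with `εⱼ = ±1` the signs of the
supertrace. The Vandermonde matrix of the distinct `λⱼ` is invertible, hence `μⱼ ∈ J²`.
Starting from `J = I` this puts every `μⱼ` in `I ^ 2 ^ d` for all `d`, so `μⱼ = 0`.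
-/

open Finset

namespace ExteriorAlgebra

variable {R M : Type*} [CommRing R] [AddCommGroup M] [Module R M]

variable (R M) in
def degreeFiltration (d : ℕ) : Submodule R (ExteriorAlgebra R M) :=
  ⨆ i, ⋀[R]^(d + i) M

lemma exteriorPower_le_degreeFiltration {d i : ℕ} (h : d ≤ i) :
    ⋀[R]^i M ≤ degreeFiltration R M d := by
  obtain ⟨i, rfl⟩ := Nat.exists_eq_add_of_le h
  exact le_iSup (fun i => ⋀[R]^(d + i) M) i

lemma degreeFiltration_antitone : Antitone (degreeFiltration R M) := fun d e h =>
  iSup_le fun i => exteriorPower_le_degreeFiltration (by omega)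

lemma degreeFiltration_mul_le (d e : ℕ) :
    degreeFiltration R M d * degreeFiltration R M e ≤ degreeFiltration R M (d + e) := by
  simp only [degreeFiltration, Submodule.iSup_mul, Submodule.mul_iSup, ← pow_add]
  exact iSup₂_le fun i j => exteriorPower_le_degreeFiltration (by omega)

lemma sub_algebraMap_algebraMapInv_mem_degreeFiltration_one (x : ExteriorAlgebra R M) :
    x - algebraMap R _ (algebraMapInv x) ∈ degreeFiltration R M 1 := by
  induction x using ExteriorAlgebra.induction with
  | algebraMap r => simp [algebraMap_leftInverse M r]
  | ι v =>
    have hv : ι R v ∈ ⋀[R]^1 M := by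
      rw [exteriorPower, pow_one]
      exact LinearMap.mem_range_self _ v
    simpa [algebraMapInv] using exteriorPower_le_degreeFiltration le_rfl hv
  | mul a b ha hb =>
    set a₀ := algebraMap R (ExteriorAlgebra R M) (algebraMapInv a)
    set b₀ := algebraMap R (ExteriorAlgebra R M) (algebraMapInv b)
    have hsplit : a * b - algebraMap R _ (algebraMapInv (a * b)) =
        (a - a₀) * (b - b₀) + a₀ * (b - b₀) + (a - a₀) * b₀ := by
      rw [map_mul, map_mul]
      noncomm_ring
    have ha₀ : a₀ * (b - b₀) = algebraMapInv a • (b - b₀) := (Algebra.smul_def _ _).symm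
    have hb₀ : (a - a₀) * b₀ = algebraMapInv b • (a - a₀) := by
      rw [Algebra.smul_def, Algebra.commutes]
    rw [hsplit, ha₀, hb₀]
    refine add_mem (add_mem ?_ (Submodule.smul_mem _ _ hb)) (Submodule.smul_mem _ _ ha)
    exact degreeFiltration_antitone (by omega)
      (degreeFiltration_mul_le 1 1 (Submodule.mul_mem_mul ha hb))
  | add a b ha hb => simpa [add_sub_add_comm] using add_mem ha hb

lemma mem_degreeFiltration_one_of_mem_ker {x : ExteriorAlgebra R M}
    (hx : x ∈ RingHom.ker (algebraMapInv : ExteriorAlgebra R M →ₐ[R] R)) :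
    x ∈ degreeFiltration R M 1 := by
  simpa [(RingHom.mem_ker).mp hx] using sub_algebraMap_algebraMapInv_mem_degreeFiltration_one x

lemma mem_degreeFiltration_of_mem_ker_pow {d : ℕ} {x : ExteriorAlgebra R M}
    (hx : x ∈ RingHom.ker (algebraMapInv : ExteriorAlgebra R M →ₐ[R] R) ^ (d + 1)) :
    x ∈ degreeFiltration R M (d + 1) := by
  induction d generalizing x with
  | zero => exact mem_degreeFiltration_one_of_mem_ker (by rwa [zero_add, Submodule.pow_one] at hx)
  | succ d ih =>
    rw [Submodule.pow_succ] at hx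
    refine Submodule.smul_induction_on hx (fun a ha b hb => ?_) (fun _ _ => add_mem)
    exact degreeFiltration_mul_le (d + 1) 1
      (Submodule.mul_mem_mul (ih ha) (mem_degreeFiltration_one_of_mem_ker hb))

section FiniteDimensional

variable {K M : Type*} [Field K] [AddCommGroup M] [Module K M] [FiniteDimensional K M]

lemma exteriorPower_eq_bot_of_finrank_lt {n : ℕ} (h : Module.finrank K M < n) :
    ⋀[K]^n M = ⊥ := by
  rw [← Submodule.finrank_eq_zero, exteriorPower.finrank_eq, Nat.choose_eq_zero_of_lt h]

lemma degreeFiltration_finrank_succ : degreeFiltration K M (Module.finrank K M + 1) = ⊥ :=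
  eq_bot_iff.mpr <| iSup_le fun _ => (exteriorPower_eq_bot_of_finrank_lt (by omega)).le

theorem isNilpotent_ker_algebraMapInv :
    IsNilpotent (RingHom.ker (algebraMapInv : ExteriorAlgebra K M →ₐ[K] K)) := by
  refine ⟨Module.finrank K M + 1, eq_bot_iff.mpr fun x hx => ?_⟩
  simpa [degreeFiltration_finrank_succ] using mem_degreeFiltration_of_mem_ker_pow hx

end FiniteDimensional

end ExteriorAlgebra

lemma algebraMap_add_pow_succ_sub_mem_sq {K A : Type*} [CommSemiring K] [Ring A] [Algebra K A]
    {J : Ideal A} {x : A} (hx : x ∈ J) (c : K) (k : ℕ) :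
    (algebraMap K A c + x) ^ (k + 1) - algebraMap K A (c ^ (k + 1)) - ((k + 1) * c ^ k) • x
      ∈ J ^ 2 := by
  have hterm : ∀ p q n : ℕ, x ^ p * algebraMap K A c ^ q * (n : A) = (c ^ q * n) • x ^ p := by
    intro p q n
    rw [← map_pow, ← map_natCast (algebraMap K A), mul_assoc, ← map_mul, ← Algebra.commutes,
      Algebra.smul_def]
  -- In the binomial expansion the terms of degree 0 and 1 in `x` cancel; the rest are multiples
  -- of `x ^ 2`.
  rw [add_comm, (Algebra.commute_algebraMap_right c x).add_pow, sum_range_succ', sum_range_succ']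
  simp only [hterm]
  simp only [Nat.choose_zero_right, Nat.choose_one_right, zero_add, pow_zero, pow_one,
    Nat.add_sub_cancel, Nat.sub_zero, Nat.cast_add_one]
  rw [Algebra.algebraMap_eq_smul_one, Nat.cast_zero, zero_add, mul_one, mul_comm (c ^ k),
    add_sub_cancel_right, add_sub_cancel_right]
  refine sum_mem fun i _ => Submodule.smul_of_tower_mem _ _ ?_
  rw [add_assoc, pow_add]
  exact Ideal.mul_mem_left _ _ (Ideal.pow_mem_pow hx 2)

lemma Submodule.mem_of_forall_sum_pow_smul_mem {K V : Type*} [Field K] [AddCommGroup V]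
    [Module K V] {n : ℕ} {l : Fin n → K} (hl : Function.Injective l) {S : Submodule K V}
    {v : Fin n → V} (h : ∀ k : Fin n, ∑ j, l j ^ (k : ℕ) • v j ∈ S) (j : Fin n) : v j ∈ S := by
  rw [← Submodule.Quotient.mk_eq_zero]
  refine (Module.forall_dual_apply_eq_zero_iff K _).mp fun φ => ?_
  have : (fun j => φ (S.mkQ (v j))) = 0 :=
    Matrix.eq_zero_of_forall_pow_sum_mul_pow_eq_zero hl fun k => by
      have hk : (φ ∘ₗ S.mkQ) (∑ j, l j ^ (k : ℕ) • v j) = 0 := by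
        rw [LinearMap.comp_apply, Submodule.mkQ_apply, (Submodule.Quotient.mk_eq_zero S).mpr (h k),
          map_zero]
      simpa [mul_comm] using hk
  exact congrFun this j

section SignedPowerSums

variable {K A : Type*} [Field K] [CharZero K] [Ring A] [Algebra K A] {n : ℕ} {l : Fin n → K}
  {ε : Fin n → K} {μ : Fin n → A}

lemma mem_sq_of_sum_smul_add_pow_eq (hl : Function.Injective l) (hε : ∀ j, ε j ≠ 0)
    (h : ∀ k, 1 ≤ k → k ≤ n →
      ∑ j, ε j • (algebraMap K A (l j) + μ j) ^ k = algebraMap K A (∑ j, ε j * l j ^ k))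
    {J : Ideal A} (hμ : ∀ j, μ j ∈ J) (j : Fin n) : μ j ∈ J ^ 2 := by
  have hlin : ∀ k : Fin n, ∑ j, l j ^ (k : ℕ) • (ε j • μ j) ∈ (J ^ 2).restrictScalars K := by
    rintro ⟨k, hk⟩
    have hbody : ∑ j, ε j • ((algebraMap K A (l j) + μ j) ^ (k + 1)
        - algebraMap K A (l j ^ (k + 1))) = 0 := by
      rw [sum_congr rfl fun j _ => smul_sub _ _ _, sum_sub_distrib, h (k + 1) (by omega) (by omega),
        map_sum, sub_eq_zero]
      simp only [map_mul, Algebra.smul_def]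
    have hrem : ∑ j, ε j • ((algebraMap K A (l j) + μ j) ^ (k + 1)
        - algebraMap K A (l j ^ (k + 1)) - ((k + 1) * l j ^ k) • μ j) ∈ J ^ 2 :=
      sum_mem fun j _ => Submodule.smul_of_tower_mem _ (ε j)
        (algebraMap_add_pow_succ_sub_mem_sq (hμ j) (l j) k)
    have hlead : ∑ j, ε j • (((k + 1) * l j ^ k) • μ j) ∈ J ^ 2 := by
      rwa [sum_congr rfl fun j _ => smul_sub _ _ _, sum_sub_distrib, hbody, zero_sub,
        neg_mem_iff] at hrem
    have hrescale : ∑ j, l j ^ k • (ε j • μ j)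
        = (k + 1 : K)⁻¹ • ∑ j, ε j • (((k + 1) * l j ^ k) • μ j) := by
      simp only [smul_sum, smul_smul]
      refine sum_congr rfl fun j _ => ?_
      congr 1
      field_simp
    rw [Submodule.restrictScalars_mem, hrescale]
    exact Submodule.smul_of_tower_mem _ _ hlead
  exact (Submodule.smul_mem_iff _ (hε j)).mp (Submodule.mem_of_forall_sum_pow_smul_mem hl hlin j)

theorem eq_zero_of_sum_smul_add_pow_eq {I : Ideal A} (hI : IsNilpotent I)
    (hl : Function.Injective l) (hε : ∀ j, ε j ≠ 0) (hμ : ∀ j, μ j ∈ I)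
    (h : ∀ k, 1 ≤ k → k ≤ n →
      ∑ j, ε j • (algebraMap K A (l j) + μ j) ^ k = algebraMap K A (∑ j, ε j * l j ^ k)) :
    μ = 0 := by
  obtain ⟨e, he⟩ := hI
  have hpow : ∀ d j, μ j ∈ I ^ 2 ^ d := by
    intro d
    induction d with
    | zero => simpa only [pow_zero, Submodule.pow_one] using hμ
    | succ d ih =>
      have hsq : I ^ 2 ^ (d + 1) = (I ^ 2 ^ d) ^ 2 := by
        rw [pow_succ, mul_two, Submodule.pow_add _ (by positivity), Submodule.pow_succ,
          Submodule.pow_one]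
      simpa only [hsq] using mem_sq_of_sum_smul_add_pow_eq hl hε h ih
  funext j
  have := Ideal.pow_le_pow_right Nat.lt_two_pow_self.le (hpow e j)
  rwa [he, Ideal.zero_eq_bot, Ideal.mem_bot] at this

end SignedPowerSums

lemma sum_filter_sub_sum_filter_not_eq_sum_smul {ι K V : Type*} [Fintype ι] [Ring K]
    [AddCommGroup V] [Module K V] (p : ι → Prop) [DecidablePred p] (f : ι → V) :
    ∑ j ∈ univ.filter p, f j - ∑ j ∈ univ.filter (fun j => ¬ p j), f j
      = ∑ j, (if p j then 1 else -1 : K) • f j := by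
  simp [ite_smul, sum_ite, sub_eq_add_neg]

theorem diagonal_supermatrix_eq_body_general (N m n : ℕ)
    (l : Fin (m + n) → ℂ) (hl : Function.Injective l)
    (μ : Fin (m + n) → ExteriorAlgebra ℂ (Fin N → ℂ))
    (hbody : ∀ j, ExteriorAlgebra.algebraMapInv (μ j) = 0)
    (hstr : ∀ k : ℕ, 1 ≤ k → k ≤ m + n →
      ∑ j ∈ Finset.univ.filter (fun j : Fin (m + n) => (j : ℕ) < m),
          (algebraMap ℂ (ExteriorAlgebra ℂ (Fin N → ℂ)) (l j) + μ j) ^ k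
        - ∑ j ∈ Finset.univ.filter (fun j : Fin (m + n) => m ≤ (j : ℕ)),
          (algebraMap ℂ (ExteriorAlgebra ℂ (Fin N → ℂ)) (l j) + μ j) ^ k
      = algebraMap ℂ (ExteriorAlgebra ℂ (Fin N → ℂ))
          (∑ j ∈ Finset.univ.filter (fun j : Fin (m + n) => (j : ℕ) < m), l j ^ k
            - ∑ j ∈ Finset.univ.filter (fun j : Fin (m + n) => m ≤ (j : ℕ)), l j ^ k)) :
    ∀ j, μ j = 0 := by
  have hsigned {V : Type} [AddCommGroup V] [Module ℂ V] (f : Fin (m + n) → V) :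
      ∑ j ∈ univ.filter (fun j : Fin (m + n) => (j : ℕ) < m), f j
        - ∑ j ∈ univ.filter (fun j : Fin (m + n) => m ≤ (j : ℕ)), f j
      = ∑ j : Fin (m + n), (if (j : ℕ) < m then 1 else -1 : ℂ) • f j := by
    simpa only [not_lt] using
      sum_filter_sub_sum_filter_not_eq_sum_smul (fun j : Fin (m + n) => (j : ℕ) < m) f
  refine congrFun (eq_zero_of_sum_smul_add_pow_eq ExteriorAlgebra.isNilpotent_ker_algebraMapInv hl
    (ε := fun j => if (j : ℕ) < m then 1 else -1) (fun j => by split_ifs <;> norm_num) hbody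
    fun k hk1 hk2 => ?_)
  simpa only [hsigned, smul_eq_mul] using hstr k hk1 hk2

/-- A diagonal supermatrix over the Grassmann algebra `Λ_N(ℂ)` whose body is
`diag(λ₁,…,λ_{m+n})` with pairwise distinct eigenvalues and whose supertraces
`str(Dᵏ)` agree with those of its body for `k = 1, …, m+n` must equal its body. -/
theorem diagonal_supermatrix_eq_body (N m n : ℕ) (hmn : 1 ≤ m + n)
    (l : Fin (m + n) → ℂ) (hl : Function.Injective l)
    (μ : Fin (m + n) → ExteriorAlgebra ℂ (Fin N → ℂ))
    (hbody : ∀ j, ExteriorAlgebra.algebraMapInv (μ j) = 0)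
    (hstr : ∀ k : ℕ, 1 ≤ k → k ≤ m + n →
      ∑ j ∈ Finset.univ.filter (fun j : Fin (m + n) => (j : ℕ) < m),
          (algebraMap ℂ (ExteriorAlgebra ℂ (Fin N → ℂ)) (l j) + μ j) ^ k
        - ∑ j ∈ Finset.univ.filter (fun j : Fin (m + n) => m ≤ (j : ℕ)),
          (algebraMap ℂ (ExteriorAlgebra ℂ (Fin N → ℂ)) (l j) + μ j) ^ k
      = algebraMap ℂ (ExteriorAlgebra ℂ (Fin N → ℂ))
          (∑ j ∈ Finset.univ.filter (fun j : Fin (m + n) => (j : ℕ) < m), l j ^ k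
            - ∑ j ∈ Finset.univ.filter (fun j : Fin (m + n) => m ≤ (j : ℕ)), l j ^ k)) :
    ∀ j, μ j = 0 :=
  diagonal_supermatrix_eq_body_general N m n l hl μ hbody hstr
end

section
/- Let Λ = Λ_N(ℂ) be the exterior algebra of the free module ℂ^N over ℂ, with body map π : Λ → ℂ applied entrywise to matrices. Let n ≥ 1 and let W ∈ Mₙ(Λ) be a matrix such that π(W) is a diagonal matrix diag(λ₁,…,λₙ) with pairwise distinct complex entries. Then there exist an invertible matrix g ∈ Mₙ(Λ) with π(g) equal to the identity matrix and a diagonal matrix D ∈ Mₙ(Λ) such that g·W = D·g, i.e. g·W·g⁻¹ = D. -/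
namespace GrassmannDiagAux

open ExteriorAlgebra

variable (N : ℕ)

local notation "Λ" => ExteriorAlgebra ℂ (Fin N → ℂ)

/-- The body map. -/
noncomputable abbrev bodyHom : Λ →ₐ[ℂ] ℂ := ExteriorAlgebra.algebraMapInv

/-- The soul (augmentation) ideal, as a `ℂ`-submodule. -/
noncomputable def KK : Submodule ℂ Λ := LinearMap.ker (bodyHom N).toLinearMap

variable {N}

lemma mem_KK {x : Λ} : x ∈ KK N ↔ bodyHom N x = 0 := LinearMap.mem_ker

lemma body_ι (v : Fin N → ℂ) : bodyHom N (ι ℂ v) = 0 := by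
  simp [bodyHom, algebraMapInv]

lemma body_algebraMap (c : ℂ) : bodyHom N (algebraMap ℂ Λ c) = c :=
  algebraMap_leftInverse _ c

lemma KK_mul_mem_left {x y : Λ} (hy : y ∈ KK N) : x * y ∈ KK N := by
  rw [mem_KK] at *
  rw [map_mul, hy, mul_zero]

lemma KK_mul_mem_right {x y : Λ} (hx : x ∈ KK N) : x * y ∈ KK N := by
  rw [mem_KK] at *
  rw [map_mul, hx, zero_mul]

lemma KKpow_mul_mem {m : ℕ} (hm : 1 ≤ m) {x : Λ} (hx : x ∈ KK N ^ m) (y : Λ) :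
    x * y ∈ KK N ^ m := by
  obtain ⟨r, rfl⟩ : ∃ r, m = r + 1 := ⟨m - 1, by omega⟩
  rw [pow_succ] at hx ⊢
  refine Submodule.mul_induction_on (C := fun z => z * y ∈ KK N ^ r * KK N) hx
    (fun a ha b hb => ?_) (fun u v hu hv => ?_)
  · show a * b * y ∈ KK N ^ r * KK N
    rw [mul_assoc]
    exact Submodule.mul_mem_mul ha (KK_mul_mem_right hb)
  · show (u + v) * y ∈ KK N ^ r * KK N
    rw [add_mul]
    exact add_mem hu hv

lemma mul_KKpow_mem {m : ℕ} (hm : 1 ≤ m) {x : Λ} (hx : x ∈ KK N ^ m) (y : Λ) :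
    y * x ∈ KK N ^ m := by
  obtain ⟨r, rfl⟩ : ∃ r, m = r + 1 := ⟨m - 1, by omega⟩
  rw [pow_succ'] at hx ⊢
  refine Submodule.mul_induction_on (C := fun z => y * z ∈ KK N * KK N ^ r) hx
    (fun a ha b hb => ?_) (fun u v hu hv => ?_)
  · show y * (a * b) ∈ KK N * KK N ^ r
    rw [← mul_assoc]
    exact Submodule.mul_mem_mul (KK_mul_mem_left ha) hb
  · show y * (u + v) ∈ KK N * KK N ^ r
    rw [mul_add]
    exact add_mem hu hv

lemma KKpow_le {a b : ℕ} (hb : 1 ≤ b) (hab : b ≤ a) : KK N ^ a ≤ KK N ^ b := by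
  obtain ⟨r, rfl⟩ : ∃ r, a = b + r := ⟨a - b, by omega⟩
  rw [pow_add]
  intro x hx
  exact Submodule.mul_induction_on (C := fun z => z ∈ KK N ^ b) hx
    (fun u hu v _ => KKpow_mul_mem hb hu v) (fun u v hu hv => add_mem hu hv)

lemma body_eq_zero_of_mem_KKpow {m : ℕ} (hm : 1 ≤ m) {x : Λ} (hx : x ∈ KK N ^ m) :
    bodyHom N x = 0 :=
  mem_KK.mp (by simpa using KKpow_le le_rfl hm hx)

lemma exteriorPower_succ_eq_bot :
    (⋀[ℂ]^(N + 1) (Fin N → ℂ) : Submodule ℂ Λ) = ⊥ := by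
  rw [← ιMulti_span_fixedDegree, Submodule.span_eq_bot]
  rintro x ⟨v, rfl⟩
  refine AlternatingMap.map_linearDependent _ v (fun hv => ?_)
  have h1 := hv.fintype_card_le_finrank
  rw [Module.finrank_fin_fun, Fintype.card_fin] at h1
  omega

lemma iota_range_pow_eq_bot {m : ℕ} (hm : N + 1 ≤ m) :
    (LinearMap.range (ι ℂ (M := Fin N → ℂ)) : Submodule ℂ Λ) ^ m = ⊥ := by
  obtain ⟨r, rfl⟩ : ∃ r, m = (N + 1) + r := ⟨m - (N + 1), by omega⟩
  rw [pow_add, show (LinearMap.range (ι ℂ (M := Fin N → ℂ)) : Submodule ℂ Λ) ^ (N + 1) = ⊥ from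
    exteriorPower_succ_eq_bot, Submodule.bot_mul]

lemma iota_range_pow_le_KK (r : ℕ) :
    (LinearMap.range (ι ℂ (M := Fin N → ℂ)) : Submodule ℂ Λ) ^ (r + 1) ≤ KK N := by
  rw [pow_succ]
  intro x hx
  refine Submodule.mul_induction_on (C := fun z => z ∈ KK N) hx
    (fun u _ v hv => ?_) (fun u v hu hv => add_mem hu hv)
  obtain ⟨w, rfl⟩ := hv
  exact KK_mul_mem_left (mem_KK.mpr (body_ι w))

lemma KK_le_iSup :
    KK N ≤ ⨆ i : ℕ, (LinearMap.range (ι ℂ (M := Fin N → ℂ)) : Submodule ℂ Λ) ^ (i + 1) := by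
  classical
  intro x hx
  have hsum := DirectSum.sum_support_decompose (fun i : ℕ => ⋀[ℂ]^i (Fin N → ℂ)) x
  have hzero : ∀ i ∈ (DirectSum.decompose (fun i : ℕ => ⋀[ℂ]^i (Fin N → ℂ)) x).support,
      i ≠ 0 → bodyHom N (DirectSum.decompose (fun i : ℕ => ⋀[ℂ]^i (Fin N → ℂ)) x i : Λ) = 0 := by
    intro i _ hi
    obtain ⟨r, rfl⟩ : ∃ r, i = r + 1 := ⟨i - 1, by omega⟩
    exact mem_KK.mp (iota_range_pow_le_KK r (SetLike.coe_mem _))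
  have h0 : (DirectSum.decompose (fun i : ℕ => ⋀[ℂ]^i (Fin N → ℂ)) x 0 : Λ) = 0 := by
    have hmem : (DirectSum.decompose (fun i : ℕ => ⋀[ℂ]^i (Fin N → ℂ)) x 0 : Λ) ∈
        (LinearMap.range (ι ℂ (M := Fin N → ℂ)) : Submodule ℂ Λ) ^ 0 := SetLike.coe_mem _
    rw [pow_zero] at hmem
    obtain ⟨c, hc⟩ := Submodule.mem_one.mp hmem
    have hbx : bodyHom N x = c := by
      conv_lhs => rw [← hsum]
      rw [map_sum, Finset.sum_eq_single 0 hzero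
        (fun h => by rw [DFinsupp.notMem_support_iff.mp h]; simp), ← hc, body_algebraMap]
    rw [mem_KK] at hx
    have hc0 : c = 0 := by rw [← hbx, hx]
    rw [← hc, hc0, map_zero]
  have hmemsum : (∑ i ∈ (DirectSum.decompose (fun i : ℕ => ⋀[ℂ]^i (Fin N → ℂ)) x).support,
      (DirectSum.decompose (fun i : ℕ => ⋀[ℂ]^i (Fin N → ℂ)) x i : Λ)) ∈
      ⨆ i : ℕ, (LinearMap.range (ι ℂ (M := Fin N → ℂ)) : Submodule ℂ Λ) ^ (i + 1) := by
    refine Submodule.sum_mem _ fun i hi => ?_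
    rcases i with _ | r
    · rw [h0]; exact zero_mem _
    · exact le_iSup
        (fun i => (LinearMap.range (ι ℂ (M := Fin N → ℂ)) : Submodule ℂ Λ) ^ (i + 1)) r
        (SetLike.coe_mem _)
  rwa [hsum] at hmemsum

lemma KKpow_eq_bot : KK N ^ (N + 1) = ⊥ := by
  set p : Submodule ℂ Λ := LinearMap.range (ι ℂ (M := Fin N → ℂ)) with hp
  have hmono : ∀ (q r : Submodule ℂ Λ), q ≤ r → ∀ m, q ^ m ≤ r ^ m := by
    intro q r hqr m
    induction m with
    | zero => simp
    | succ m ih => rw [pow_succ, pow_succ]; exact mul_le_mul' ih hqr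
  have hF : ∀ m : ℕ, (⨆ i : ℕ, p ^ (i + 1)) ^ (m + 1) ≤ ⨆ i : ℕ, p ^ (i + m + 1) := by
    intro m
    induction m with
    | zero => rw [pow_one]
    | succ m ih =>
      rw [pow_succ]
      refine le_trans (mul_le_mul' ih le_rfl) ?_
      rw [Submodule.iSup_mul]
      refine iSup_le fun i => ?_
      rw [Submodule.mul_iSup]
      refine iSup_le fun j => ?_
      rw [← pow_add, show i + m + 1 + (j + 1) = (i + j) + (m + 1) + 1 by omega]
      exact le_iSup (fun i => p ^ (i + (m + 1) + 1)) (i + j)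
  refine le_bot_iff.mp ?_
  calc KK N ^ (N + 1) ≤ (⨆ i : ℕ, p ^ (i + 1)) ^ (N + 1) := hmono _ _ KK_le_iSup _
    _ ≤ ⨆ i : ℕ, p ^ (i + N + 1) := hF N
    _ ≤ ⊥ := iSup_le fun i => by rw [iota_range_pow_eq_bot (by omega)]

lemma eq_zero_of_mem_KKpow {m : ℕ} (hm : N + 1 ≤ m) {x : Λ} (hx : x ∈ KK N ^ m) : x = 0 := by
  have h1 := KKpow_le (by omega : 1 ≤ N + 1) hm hx
  rwa [KKpow_eq_bot, Submodule.mem_bot] at h1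

/-- Solving the Sylvester-type equation by downward induction on nilpotency. -/
lemma solve_aux (c : ℂ) (hc0 : c ≠ 0) {s t : Λ} (hsK : s ∈ KK N) (htK : t ∈ KK N) :
    ∀ (q r : ℕ), 1 ≤ r → N + 1 ≤ r + q → ∀ a ∈ KK N ^ r,
      ∃ x ∈ KK N ^ r, c • x + (s * x - x * t) = a := by
  intro q
  induction q with
  | zero =>
    intro r hr hNr a ha
    refine ⟨0, zero_mem _, ?_⟩
    rw [eq_zero_of_mem_KKpow (by omega) ha]
    simp
  | succ q ih =>
    intro r hr hNr a ha
    set x₀ : Λ := c⁻¹ • a with hx₀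
    have hx₀mem : x₀ ∈ KK N ^ r := Submodule.smul_mem _ _ ha
    have hcx₀ : c • x₀ = a := by rw [hx₀, smul_smul, mul_inv_cancel₀ hc0, one_smul]
    have hSx₀ : s * x₀ - x₀ * t ∈ KK N ^ (r + 1) := by
      refine sub_mem ?_ ?_
      · rw [pow_succ']
        exact Submodule.mul_mem_mul hsK hx₀mem
      · rw [pow_succ]
        exact Submodule.mul_mem_mul hx₀mem htK
    obtain ⟨x₁, hx₁mem, hx₁eq⟩ := ih (r + 1) (by omega) (by omega) _ hSx₀
    refine ⟨x₀ - x₁, sub_mem hx₀mem (KKpow_le hr (by omega) hx₁mem), ?_⟩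
    have expand : c • (x₀ - x₁) + (s * (x₀ - x₁) - (x₀ - x₁) * t)
        = (c • x₀ + (s * x₀ - x₀ * t)) - (c • x₁ + (s * x₁ - x₁ * t)) := by
      rw [smul_sub, mul_sub, sub_mul]; abel
    rw [expand, hx₁eq, hcx₀]
    abel

lemma solve_sylvester (di dj : Λ) (ci cj : ℂ) (hdi : bodyHom N di = ci)
    (hdj : bodyHom N dj = cj) (hne : ci ≠ cj) {k : ℕ} (hk : 1 ≤ k)
    {a : Λ} (ha : a ∈ KK N ^ k) :
    ∃ x ∈ KK N ^ k, di * x - x * dj = a := by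
  set s : Λ := di - algebraMap ℂ Λ ci with hs
  set t : Λ := dj - algebraMap ℂ Λ cj with ht
  have hsK : s ∈ KK N := mem_KK.mpr (by rw [hs, map_sub, hdi, body_algebraMap, sub_self])
  have htK : t ∈ KK N := mem_KK.mpr (by rw [ht, map_sub, hdj, body_algebraMap, sub_self])
  have hc0 : ci - cj ≠ 0 := sub_ne_zero.mpr hne
  obtain ⟨x, hxmem, hxeq⟩ := solve_aux (ci - cj) hc0 hsK htK (N + 1) k hk (by omega) a ha
  refine ⟨x, hxmem, ?_⟩
  have h1 : algebraMap ℂ Λ ci + s = di := by rw [hs]; abel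
  have h2 : algebraMap ℂ Λ cj + t = dj := by rw [ht]; abel
  calc di * x - x * dj = (algebraMap ℂ Λ ci + s) * x - x * (algebraMap ℂ Λ cj + t) := by
        rw [h1, h2]
    _ = (ci • x + s * x) - (cj • x + x * t) := by
        rw [add_mul, mul_add, ← Algebra.smul_def, ← Algebra.commutes, ← Algebra.smul_def]
    _ = (ci - cj) • x + (s * x - x * t) := by rw [sub_smul]; abel
    _ = a := hxeq

variable {n : ℕ}

lemma ent_mul_mem {a b : ℕ} {A B : Matrix (Fin n) (Fin n) Λ}
    (hA : ∀ i j, A i j ∈ KK N ^ a) (hB : ∀ i j, B i j ∈ KK N ^ b) (i j : Fin n) :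
    (A * B) i j ∈ KK N ^ (a + b) := by
  rw [Matrix.mul_apply]
  exact Submodule.sum_mem _ fun l _ => by
    rw [pow_add]; exact Submodule.mul_mem_mul (hA i l) (hB l j)

lemma matrix_pow_eq_zero {h : Matrix (Fin n) (Fin n) Λ} (hh : ∀ i j, h i j ∈ KK N) :
    h ^ (N + 1) = 0 := by
  have hpow : ∀ m : ℕ, ∀ i j, (h ^ (m + 1)) i j ∈ KK N ^ (m + 1) := by
    intro m
    induction m with
    | zero => intro i j; rw [pow_one, pow_one]; exact hh i j
    | succ m ih =>
      intro i j
      rw [pow_succ]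
      exact ent_mul_mem ih (fun i j => by rw [pow_one]; exact hh i j) i j
  exact Matrix.ext fun i j => eq_zero_of_mem_KKpow le_rfl (hpow N i j)

end GrassmannDiagAux

open GrassmannDiagAux in
set_option maxHeartbeats 1000000 in
set_option synthInstance.maxHeartbeats 200000 in
/-- A matrix over the Grassmann algebra `Λ_N(ℂ)` whose body is a diagonal matrix with
pairwise distinct complex eigenvalues can be conjugated to a diagonal matrix by an
invertible matrix with identity body. -/
theorem diagonalization_over_grassmann (N n : ℕ) (hn : 1 ≤ n)
    (l : Fin n → ℂ) (hl : Function.Injective l)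
    (W : Matrix (Fin n) (Fin n) (ExteriorAlgebra ℂ (Fin N → ℂ)))
    (hW : W.map (ExteriorAlgebra.algebraMapInv (M := Fin N → ℂ)) = Matrix.diagonal l) :
    ∃ g D : Matrix (Fin n) (Fin n) (ExteriorAlgebra ℂ (Fin N → ℂ)),
      IsUnit g ∧
      g.map (ExteriorAlgebra.algebraMapInv (M := Fin N → ℂ)) = 1 ∧
      D.IsDiag ∧
      g * W = D * g := by
  classical
  obtain ⟨g, d, E, hgU, hgmap, hd, hE, hgW⟩ :
      ∃ (g : Matrix (Fin n) (Fin n) (ExteriorAlgebra ℂ (Fin N → ℂ)))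
        (d : Fin n → ExteriorAlgebra ℂ (Fin N → ℂ))
        (E : Matrix (Fin n) (Fin n) (ExteriorAlgebra ℂ (Fin N → ℂ))),
        IsUnit g ∧ g.map (bodyHom N) = 1 ∧
        (∀ i, bodyHom N (d i) = l i) ∧
        (∀ i j, E i j ∈ KK N ^ (N + 1)) ∧
        g * W = (Matrix.diagonal d + E) * g := by
    have key : ∀ k : ℕ, 1 ≤ k →
        ∃ (g : Matrix (Fin n) (Fin n) (ExteriorAlgebra ℂ (Fin N → ℂ)))
          (d : Fin n → ExteriorAlgebra ℂ (Fin N → ℂ))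
          (E : Matrix (Fin n) (Fin n) (ExteriorAlgebra ℂ (Fin N → ℂ))),
          IsUnit g ∧ g.map (bodyHom N) = 1 ∧
          (∀ i, bodyHom N (d i) = l i) ∧
          (∀ i j, E i j ∈ KK N ^ k) ∧
          g * W = (Matrix.diagonal d + E) * g := by
      intro k hk
      induction k, hk using Nat.le_induction with
      | base =>
        refine ⟨1, fun i => algebraMap ℂ _ (l i),
          W - Matrix.diagonal (fun i => algebraMap ℂ _ (l i)), isUnit_one,
          Matrix.map_one _ (map_zero _) (map_one _), fun i => body_algebraMap (l i),
          ?_, by rw [one_mul, mul_one]; abel⟩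
        intro i j
        rw [pow_one, mem_KK, Matrix.sub_apply, map_sub]
        have h1 : bodyHom N (W i j) = Matrix.diagonal l i j := by
          rw [← hW]; simp [Matrix.map_apply]
        have h2 : bodyHom N (Matrix.diagonal (fun i => algebraMap ℂ _ (l i)) i j)
            = Matrix.diagonal l i j := by
          by_cases hij : i = j
          · subst hij; simp [body_algebraMap]
          · simp [Matrix.diagonal_apply_ne _ hij]
        rw [h1, h2, sub_self]
      | succ k hk ih =>
        obtain ⟨g, d, E, hgU, hgmap, hd, hE, hgW⟩ := ih
        have sol : ∀ i j : Fin n, i ≠ j →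
            ∃ x ∈ KK N ^ k, d i * x - x * d j = E i j :=
          fun i j hij => solve_sylvester (d i) (d j) (l i) (l j) (hd i) (hd j)
            (fun e => hij (hl e)) hk (hE i j)
        set h : Matrix (Fin n) (Fin n) (ExteriorAlgebra ℂ (Fin N → ℂ)) :=
          Matrix.of (fun i j => if hij : i = j then 0 else (sol i j hij).choose) with hh
        have hhmem : ∀ i j, h i j ∈ KK N ^ k := by
          intro i j
          by_cases hij : i = j
          · simp only [hh, Matrix.of_apply, dif_pos hij]; exact zero_mem _
          · simp only [hh, Matrix.of_apply, dif_neg hij]; exact (sol i j hij).choose_spec.1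
        have hheq : ∀ i j, i ≠ j → d i * h i j - h i j * d j = E i j := by
          intro i j hij
          simp only [hh, Matrix.of_apply, dif_neg hij]
          exact (sol i j hij).choose_spec.2
        have hhK : ∀ i j, h i j ∈ KK N := fun i j => by
          simpa using KKpow_le le_rfl hk (hhmem i j)
        have hnil : (-h) ^ (N + 1) = 0 := by
          rw [neg_pow, matrix_pow_eq_zero hhK, mul_zero]
        set u : Matrix (Fin n) (Fin n) (ExteriorAlgebra ℂ (Fin N → ℂ)) :=
          ∑ i ∈ Finset.range (N + 1), (-h) ^ i with hu
        have hneg : -h - 1 = -(1 + h) := by abel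
        have huu : u * (1 + h) = 1 := by
          have h1 := geom_sum_mul (-h) (N + 1)
          rw [hnil, zero_sub, ← hu, hneg, mul_neg] at h1
          exact neg_injective h1
        have huu' : (1 + h) * u = 1 := by
          have h1 := mul_geom_sum (-h) (N + 1)
          rw [hnil, zero_sub, ← hu, hneg, neg_mul] at h1
          exact neg_injective h1
        have hU : IsUnit (1 + h) := ⟨⟨1 + h, u, huu', huu⟩, rfl⟩
        set d' : Fin n → ExteriorAlgebra ℂ (Fin N → ℂ) := fun i => d i + E i i with hd'
        set X : Matrix (Fin n) (Fin n) (ExteriorAlgebra ℂ (Fin N → ℂ)) :=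
          (1 + h) * (Matrix.diagonal d + E) - Matrix.diagonal d' * (1 + h) with hX
        have hXent : ∀ i j, X i j = (h * E) i j - E i i * h i j := by
          intro i j
          have expand : X i j = Matrix.diagonal d i j + E i j + h i j * d j + (h * E) i j
              - Matrix.diagonal d' i j - d' i * h i j := by
            simp only [hX, Matrix.sub_apply, Matrix.add_apply, Matrix.add_mul, Matrix.mul_add,
              Matrix.one_mul, Matrix.mul_one, Matrix.mul_diagonal, Matrix.diagonal_mul]
            abel
          by_cases hij : i = j
          · subst hij
            have h0 : h i i = 0 := by simp [hh]
            rw [expand, Matrix.diagonal_apply_eq, Matrix.diagonal_apply_eq, hd', h0]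
            noncomm_ring
          · rw [expand, Matrix.diagonal_apply_ne _ hij, Matrix.diagonal_apply_ne _ hij, hd',
              ← hheq i j hij]
            noncomm_ring
        have hXmem : ∀ i j, X i j ∈ KK N ^ (k + 1) := by
          intro i j
          rw [hXent]
          refine sub_mem (KKpow_le (by omega) (by omega) (ent_mul_mem hhmem hE i j)) ?_
          refine KKpow_le (by omega) (by omega : k + 1 ≤ k + k) ?_
          rw [pow_add]
          exact Submodule.mul_mem_mul (hE i i) (hhmem i j)
        refine ⟨(1 + h) * g, d', X * u, hU.mul hgU, ?_, ?_, ?_, ?_⟩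
        · have hmap1 : (1 + h).map (bodyHom N) = (1 : Matrix (Fin n) (Fin n) ℂ) := by
            ext i j
            have hz : bodyHom N (h i j) = 0 := mem_KK.mp (hhK i j)
            rw [Matrix.map_apply, Matrix.add_apply, map_add, hz, add_zero]
            by_cases hij : i = j
            · subst hij; rw [Matrix.one_apply_eq, Matrix.one_apply_eq, map_one]
            · rw [Matrix.one_apply_ne hij, Matrix.one_apply_ne hij, map_zero]
          rw [show ((1 + h) * g).map (bodyHom N)
              = ((1 + h).map (bodyHom N)) * (g.map (bodyHom N)) from
            Matrix.map_mul (f := (bodyHom N).toRingHom), hmap1, hgmap, one_mul]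
        · intro i
          rw [hd', map_add, hd i, body_eq_zero_of_mem_KKpow hk (hE i i), add_zero]
        · intro i j
          rw [Matrix.mul_apply]
          exact Submodule.sum_mem _ fun m _ =>
            KKpow_mul_mem (by omega) (hXmem i m) _
        · have hXdef : Matrix.diagonal d' * (1 + h) + X = (1 + h) * (Matrix.diagonal d + E) := by
            rw [hX]; abel
          have hcancel : (X * u) * ((1 + h) * g) = X * g := by
            rw [mul_assoc X, ← mul_assoc u, huu, one_mul]
          have hstep : (Matrix.diagonal d' + X * u) * ((1 + h) * g)
              = ((1 + h) * (Matrix.diagonal d + E)) * g := by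
            rw [add_mul (Matrix.diagonal d') (X * u), hcancel,
              ← mul_assoc (Matrix.diagonal d'), ← add_mul, hXdef]
          calc (1 + h) * g * W = (1 + h) * ((Matrix.diagonal d + E) * g) := by
                rw [mul_assoc, hgW]
            _ = ((1 + h) * (Matrix.diagonal d + E)) * g := by rw [mul_assoc]
            _ = (Matrix.diagonal d' + X * u) * ((1 + h) * g) := hstep.symm
    exact key (N + 1) (by omega)
  have hE0 : E = 0 := Matrix.ext fun i j => eq_zero_of_mem_KKpow le_rfl (hE i j)
  exact ⟨g, Matrix.diagonal d, hgU, hgmap, Matrix.isDiag_diagonal d,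
    by rw [hgW, hE0, add_zero]⟩
end

section
/- Let R be a nontrivial commutative ring, let Λ = Λ_N(R) be the exterior algebra of the free module R^N over R, and let m, n ≥ 1. Let g be the (m+n)×(m+n) matrix over Λ written in block form g = (p q; r s), where p is m×m and s is n×n with all entries in the even part of Λ, and q is m×n and r is n×m with all entries in the odd part of Λ. Then g is invertible in the matrix ring M_{m+n}(Λ) if and only if p is invertible in M_m(Λ) and s is invertible in Mₙ(Λ). -/
/-- The even part of the exterior algebra: the sum of the homogeneous components of even
exterior degree. -/
noncomputable def evenPart (R : Type*) [CommRing R] (M : Type*) [AddCommGroup M]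
    [Module R M] : Submodule R (ExteriorAlgebra R M) :=
  ⨆ i : ℕ, LinearMap.range (ExteriorAlgebra.ι R (M := M)) ^ (2 * i)

/-- The odd part of the exterior algebra: the sum of the homogeneous components of odd
exterior degree. -/
noncomputable def oddPart (R : Type*) [CommRing R] (M : Type*) [AddCommGroup M]
    [Module R M] : Submodule R (ExteriorAlgebra R M) :=
  ⨆ i : ℕ, LinearMap.range (ExteriorAlgebra.ι R (M := M)) ^ (2 * i + 1)

/-! The counit `ε : Λ_N(R) → R` has a nilpotent kernel, since every product of more than `N`
vectors vanishes in `Λ_N(R)`; entrywise, so does the induced map of matrix rings, and as `ε` has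
a section, a matrix over `Λ_N(R)` is invertible iff its image under `ε` is. The odd blocks `q`
and `r` lie in the kernel, so the image of `g` is block diagonal with blocks `ε p` and `ε s`. -/

theorem RingHom.isUnit_map_iff_of_rightInverse {A B : Type*} [Ring A] [Ring B] (f : A →+* B)
    {g : B →* A} (hfg : Function.RightInverse g f) (hker : ∀ a, f a = 0 → IsNilpotent a)
    (a : A) : IsUnit (f a) ↔ IsUnit a := by
  refine ⟨fun ha => ?_, (·.map f)⟩
  obtain ⟨u, hu⟩ := ha.map g
  have hnil : IsNilpotent (↑u⁻¹ * (a - u)) :=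
    hker _ (by rw [map_mul, map_sub, hu, hfg, sub_self, mul_zero])
  have ha : a = u * (↑u⁻¹ * (a - u) + 1) := by
    rw [mul_add, Units.mul_inv_cancel_left, mul_one, sub_add_cancel]
  rw [ha]
  exact u.isUnit.mul hnil.isUnit_add_one

theorem Matrix.pow_apply_mem_pow {R A ι : Type*} [CommSemiring R] [Semiring A] [Algebra R A]
    [Fintype ι] [DecidableEq ι] {I : Submodule R A} {X : Matrix ι ι A} (hX : ∀ i j, X i j ∈ I)
    (k : ℕ) (i j : ι) : (X ^ k) i j ∈ I ^ k := by
  induction k generalizing j with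
  | zero =>
    rw [pow_zero, pow_zero, Matrix.one_apply]
    split_ifs
    exacts [Submodule.one_le.mp le_rfl, zero_mem _]
  | succ k ih =>
    rw [pow_succ, pow_succ, Matrix.mul_apply]
    exact Submodule.sum_mem _ fun l _ => Submodule.mul_mem_mul (ih l) (hX l j)

theorem Matrix.isNilpotent_of_forall_mem {R A ι : Type*} [CommSemiring R] [Semiring A]
    [Algebra R A] [Fintype ι] [DecidableEq ι] {I : Submodule R A} (hI : IsNilpotent I)
    {X : Matrix ι ι A} (hX : ∀ i j, X i j ∈ I) : IsNilpotent X := by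
  obtain ⟨k, hk⟩ := hI
  refine ⟨k, Matrix.ext fun i j => ?_⟩
  simpa [hk] using Matrix.pow_apply_mem_pow hX k i j

namespace ExteriorAlgebra

variable {R M : Type*} [CommRing R] [AddCommGroup M] [Module R M]

local notation "P" => LinearMap.range (ι R : M →ₗ[R] ExteriorAlgebra R M)

theorem exteriorPower_eq_bot_of_card_lt {s : Finset M} (hs : Submodule.span R (s : Set M) = ⊤)
    {n : ℕ} (hn : s.card < n) : ⋀[R]^n M = ⊥ := by
  rw [← exteriorPower.ιMulti_span_fixedDegree_of_span_eq_top R n M hs, Submodule.span_eq_bot]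
  rintro - ⟨v, hv, rfl⟩
  refine (ιMulti R n).map_eq_zero_of_not_injective v fun hinj => hn.not_ge ?_
  calc n = (Finset.univ.map ⟨v, hinj⟩).card := by simp
    _ ≤ s.card := Finset.card_le_card fun x hx => by
      obtain ⟨i, -, rfl⟩ := Finset.mem_map.mp hx
      exact hv ⟨i, rfl⟩

theorem isNilpotent_range_ι [Module.Finite R M] : IsNilpotent P := by
  obtain ⟨s, hs⟩ := Module.Finite.fg_top (R := R) (M := M)
  exact ⟨s.card + 1, exteriorPower_eq_bot_of_card_lt hs (Nat.lt_succ_self _)⟩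

theorem iSup_range_ι_pow_eq_top : ⨆ i : ℕ, P ^ i = ⊤ :=
  CliffordAlgebra.iSup_ι_range_eq_top (0 : QuadraticForm R M)

theorem top_mul_range_ι : ⊤ * P = P * ⊤ := by
  simp only [← iSup_range_ι_pow_eq_top, Submodule.iSup_mul, Submodule.mul_iSup, ← pow_succ,
    ← pow_succ']

theorem range_ι_mul_top_pow_le (k : ℕ) : (P * ⊤) ^ k ≤ P ^ k * ⊤ := by
  induction k with
  | zero => simp
  | succ k ih =>
    calc (P * ⊤) ^ (k + 1) ≤ P ^ k * ⊤ * (P * ⊤) := mul_le_mul_left ih _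
      _ = P ^ k * (⊤ * P) * ⊤ := by simp only [mul_assoc]
      _ = P ^ (k + 1) * (⊤ * ⊤) := by rw [top_mul_range_ι, pow_succ]; simp only [mul_assoc]
      _ ≤ P ^ (k + 1) * ⊤ := mul_le_mul_right le_top _

theorem top_le_one_sup_range_ι_mul_top : ⊤ ≤ 1 ⊔ P * ⊤ := by
  refine iSup_range_ι_pow_eq_top.ge.trans (iSup_le fun i => ?_)
  cases i with
  | zero => exact le_sup_of_le_left (pow_zero P).le
  | succ i => exact le_sup_of_le_right (by rw [pow_succ']; exact mul_le_mul_right le_top _)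

theorem range_ι_mul_top_le_ker_algebraMapInv :
    P * ⊤ ≤ LinearMap.ker (algebraMapInv : ExteriorAlgebra R M →ₐ[R] R).toLinearMap := by
  have hP : Submodule.map (algebraMapInv : ExteriorAlgebra R M →ₐ[R] R).toLinearMap P = ⊥ := by
    refine eq_bot_iff.mpr ?_
    rintro - ⟨-, ⟨m, rfl⟩, rfl⟩
    simp [algebraMapInv]
  rw [LinearMap.le_ker_iff_map, Submodule.map_mul, hP, Submodule.bot_mul]

theorem ker_algebraMapInv :
    LinearMap.ker (algebraMapInv : ExteriorAlgebra R M →ₐ[R] R).toLinearMap = P * ⊤ := by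
  refine le_antisymm (fun x hx => ?_) ?_
  · have hx' : x ∈ 1 ⊔ P * ⊤ := top_le_one_sup_range_ι_mul_top Submodule.mem_top
    obtain ⟨-, ⟨r, rfl⟩, j, hj, rfl⟩ := Submodule.mem_sup.mp hx'
    have hεj : algebraMapInv j = 0 := range_ι_mul_top_le_ker_algebraMapInv hj
    have hr : r = 0 := by simpa [hεj] using hx
    simpa [hr] using hj
  · exact range_ι_mul_top_le_ker_algebraMapInv

theorem isNilpotent_ker_algebraMapInv_s11 [Module.Finite R M] :
    IsNilpotent (LinearMap.ker (algebraMapInv : ExteriorAlgebra R M →ₐ[R] R).toLinearMap) := by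
  obtain ⟨k, hk⟩ := isNilpotent_range_ι (R := R) (M := M)
  refine ⟨k, le_bot_iff.mp ?_⟩
  rw [ker_algebraMapInv]
  exact (range_ι_mul_top_pow_le k).trans (by rw [hk, zero_mul, Submodule.zero_eq_bot])

theorem isUnit_matrix_iff [Module.Finite R M] {ι : Type*} [Fintype ι] [DecidableEq ι]
    (X : Matrix ι ι (ExteriorAlgebra R M)) : IsUnit X ↔ IsUnit (X.map algebraMapInv) := by
  refine (RingHom.isUnit_map_iff_of_rightInverse (algebraMapInv : _ →ₐ[R] R).toRingHom.mapMatrix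
    (g := (algebraMap R (ExteriorAlgebra R M)).mapMatrix.toMonoidHom) (fun Y => ?_)
    (fun Y hY => ?_) X).symm
  · ext i j
    exact algebraMap_leftInverse M (Y i j)
  · exact Matrix.isNilpotent_of_forall_mem isNilpotent_ker_algebraMapInv_s11
      fun i j => LinearMap.mem_ker.mpr (congr_fun₂ hY i j)

theorem algebraMapInv_eq_zero_of_mem_oddPart {x : ExteriorAlgebra R M} (hx : x ∈ oddPart R M) :
    algebraMapInv x = 0 := by
  have hodd : oddPart R M ≤ P * ⊤ := iSup_le fun i => by
    rw [pow_succ']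
    exact mul_le_mul_right le_top _
  exact range_ι_mul_top_le_ker_algebraMapInv (hodd hx)

end ExteriorAlgebra

theorem supermatrix_isUnit_iff_general (R : Type*) [CommRing R] (NN m n : ℕ)
    (p : Matrix (Fin m) (Fin m) (ExteriorAlgebra R (Fin NN → R)))
    (q : Matrix (Fin m) (Fin n) (ExteriorAlgebra R (Fin NN → R)))
    (r : Matrix (Fin n) (Fin m) (ExteriorAlgebra R (Fin NN → R)))
    (s : Matrix (Fin n) (Fin n) (ExteriorAlgebra R (Fin NN → R)))
    (hq : ∀ i j, q i j ∈ oddPart R (Fin NN → R))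
    (hr : ∀ i j, r i j ∈ oddPart R (Fin NN → R)) :
    IsUnit (Matrix.fromBlocks p q r s) ↔ IsUnit p ∧ IsUnit s := by
  have hq₀ : q.map ExteriorAlgebra.algebraMapInv = 0 := by
    ext i j
    exact ExteriorAlgebra.algebraMapInv_eq_zero_of_mem_oddPart (hq i j)
  have hr₀ : r.map ExteriorAlgebra.algebraMapInv = 0 := by
    ext i j
    exact ExteriorAlgebra.algebraMapInv_eq_zero_of_mem_oddPart (hr i j)
  rw [ExteriorAlgebra.isUnit_matrix_iff, Matrix.fromBlocks_map, hq₀, hr₀,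
    Matrix.isUnit_fromBlocks_zero₂₁, ← ExteriorAlgebra.isUnit_matrix_iff,
    ← ExteriorAlgebra.isUnit_matrix_iff]

/-- Invertibility criterion for supermatrices (Example 3.3 of the paper): a block matrix
`(p q; r s)` over the Grassmann algebra `Λ_N(R)`, with even diagonal blocks and odd
off-diagonal blocks, is invertible iff both diagonal blocks `p` and `s` are invertible. -/
theorem supermatrix_isUnit_iff (R : Type*) [CommRing R] [Nontrivial R] (NN m n : ℕ)
    (hm : 1 ≤ m) (hn : 1 ≤ n)
    (p : Matrix (Fin m) (Fin m) (ExteriorAlgebra R (Fin NN → R)))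
    (q : Matrix (Fin m) (Fin n) (ExteriorAlgebra R (Fin NN → R)))
    (r : Matrix (Fin n) (Fin m) (ExteriorAlgebra R (Fin NN → R)))
    (s : Matrix (Fin n) (Fin n) (ExteriorAlgebra R (Fin NN → R)))
    (hp : ∀ i j, p i j ∈ evenPart R (Fin NN → R))
    (hs : ∀ i j, s i j ∈ evenPart R (Fin NN → R))
    (hq : ∀ i j, q i j ∈ oddPart R (Fin NN → R))
    (hr : ∀ i j, r i j ∈ oddPart R (Fin NN → R)) :
    IsUnit (Matrix.fromBlocks p q r s) ↔ IsUnit p ∧ IsUnit s :=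
  supermatrix_isUnit_iff_general R NN m n p q r s hq hr
end

section
/- Let R be a nontrivial commutative ring, let Λ = Λ_N(R) be the exterior algebra of the free module R^N over R, and let m, n ≥ 1. Let g = (p q; r s) be a block matrix over Λ where p is m×m and s is n×n with all entries in the even part of Λ, and q is m×n and r is n×m with all entries in the odd part of Λ. Assume p and s are invertible as matrices over the even part of Λ (a commutative subring of Λ). Then det(p − q·s⁻¹·r), computed in the commutative even subring, is a unit; consequently the Berezinian Ber(g) = det(p − q·s⁻¹·r) · (det s)⁻¹ is a unit of Λ. -/
/-- The determinant of a square matrix with entries in a (possibly noncommutative) ring,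
given by the Leibniz formula; for a matrix whose entries lie in a commutative subring this
is the determinant computed in that subring. -/
noncomputable def detLeibniz {Λ : Type*} [Ring Λ] {n : ℕ}
    (M : Matrix (Fin n) (Fin n) Λ) : Λ :=
  ∑ σ : Equiv.Perm (Fin n),
    (Equiv.Perm.sign σ : ℤ) • (List.ofFn fun i => M (σ i) i).prod

/-!
Even elements of an exterior algebra are central, so `p`, `s` and `q s⁻¹ r` have entries in the
commutative ring `Z` of central elements, where `detLeibniz` is the ordinary determinant. Every
entry of `q s⁻¹ r` is a sum of products ending in an odd element, so it has exterior degree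
`≥ 1`, and such elements are nilpotent because `R^N` is finitely generated. Hence
`det (p - q s⁻¹ r) ≡ det p` modulo the nilradical of `Z`, and a unit modulo a nil ideal is a
unit.
-/

theorem Matrix.mul_apply_mem_graded {ι R A : Type*} [AddMonoid ι] [CommSemiring R] [Semiring A]
    [Algebra R A] {𝒜 : ι → Submodule R A} [SetLike.GradedMonoid 𝒜] {l m n : Type*}
    [Fintype m] {P : Matrix l m A} {Q : Matrix m n A} {i j : ι} (hP : ∀ a b, P a b ∈ 𝒜 i)
    (hQ : ∀ a b, Q a b ∈ 𝒜 j) (a : l) (c : n) : (P * Q) a c ∈ 𝒜 (i + j) :=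
  Submodule.sum_mem _ fun b _ => SetLike.mul_mem_graded (hP a b) (hQ b c)

namespace ExteriorAlgebra

variable {R M : Type*} [CommRing R] [AddCommGroup M] [Module R M]

open CliffordAlgebra

theorem evenPart_eq_evenOdd_zero : evenPart R M = evenOdd (0 : QuadraticForm R M) 0 := by
  refine le_antisymm (iSup_le fun i => le_iSup_of_le
    ⟨2 * i, ZMod.natCast_eq_zero_iff_even.2 (even_two_mul i)⟩ le_rfl)
    (iSup_le fun ⟨i, hi⟩ => ?_)
  obtain ⟨k, rfl⟩ := ZMod.natCast_eq_zero_iff_even.mp hi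
  exact le_iSup_of_le k (by rw [two_mul])

theorem oddPart_eq_evenOdd_one : oddPart R M = evenOdd (0 : QuadraticForm R M) 1 := by
  refine le_antisymm (iSup_le fun i => le_iSup_of_le
    ⟨2 * i + 1, ZMod.natCast_eq_one_iff_odd.2 (odd_two_mul_add_one i)⟩ le_rfl)
    (iSup_le fun ⟨i, hi⟩ => ?_)
  obtain ⟨k, rfl⟩ := ZMod.natCast_eq_one_iff_odd.mp hi
  exact le_iSup_of_le k le_rfl

theorem ι_mul_ι_mem_center (u v : M) :
    ι R u * ι R v ∈ Subalgebra.center R (ExteriorAlgebra R M) := by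
  rw [Subalgebra.mem_center_iff]
  intro y
  induction y using ExteriorAlgebra.induction with
  | algebraMap r => exact Algebra.commutes r _
  | ι m =>
    have swap (a b : M) : ι R a * ι R b = -(ι R b * ι R a) :=
      eq_neg_of_add_eq_zero_left (ι_add_mul_swap a b)
    rw [← mul_assoc, swap m u, neg_mul, mul_assoc, swap m v, mul_neg, neg_neg, mul_assoc]
  | mul a b ha hb => rw [mul_assoc, hb, ← mul_assoc, ha, mul_assoc]
  | add a b ha hb => rw [add_mul, mul_add, ha, hb]

theorem mem_center_of_mem_evenPart {x : ExteriorAlgebra R M} (hx : x ∈ evenPart R M) :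
    x ∈ Subalgebra.center R (ExteriorAlgebra R M) := by
  rw [evenPart_eq_evenOdd_zero] at hx
  induction x, hx using even_induction with
  | algebraMap r => exact Subalgebra.algebraMap_mem _ r
  | add x y _ _ hx hy => exact add_mem hx hy
  | ι_mul_ι_mul u v x _ hx => exact mul_mem (ι_mul_ι_mem_center u v) hx

variable (R M) in
def degreeAtLeast (k : ℕ) : Submodule R (ExteriorAlgebra R M) :=
  ⨆ i, ⋀[R]^(i + k) M

theorem degreeAtLeast_zero : degreeAtLeast R M 0 = ⊤ :=
  iSup_ι_range_eq_top 0

theorem degreeAtLeast_mul_le (a b : ℕ) :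
    degreeAtLeast R M a * degreeAtLeast R M b ≤ degreeAtLeast R M (a + b) := by
  simp only [degreeAtLeast, Submodule.iSup_mul, Submodule.mul_iSup, ← pow_add]
  exact iSup₂_le fun i j => le_iSup_of_le (i + j) (le_of_eq (by congr 1; ring))

theorem pow_degreeAtLeast_one_le (k : ℕ) : degreeAtLeast R M 1 ^ k ≤ degreeAtLeast R M k := by
  induction k with
  | zero => simp [degreeAtLeast_zero]
  | succ k ih =>
    rw [pow_succ]
    exact (mul_le_mul_left ih _).trans (degreeAtLeast_mul_le k 1)

theorem mul_mem_degreeAtLeast_one (x : ExteriorAlgebra R M) {y : ExteriorAlgebra R M}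
    (hy : y ∈ degreeAtLeast R M 1) : x * y ∈ degreeAtLeast R M 1 := by
  simpa using degreeAtLeast_mul_le 0 1 (Submodule.mul_mem_mul (by simp [degreeAtLeast_zero]) hy)

theorem oddPart_le_degreeAtLeast_one : oddPart R M ≤ degreeAtLeast R M 1 :=
  iSup_le fun i => le_iSup_of_le (2 * i) le_rfl

theorem exteriorPower_eq_bot_of_card_lt_s12 {I : Type*} [LinearOrder I] [Finite I] {v : I → M}
    (hv : Submodule.span R (Set.range v) = ⊤) {n : ℕ} (hn : Nat.card I < n) :
    ⋀[R]^n M = ⊥ := by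
  have : IsEmpty (Set.powersetCard I n) := by
    rw [Set.isEmpty_coe_sort, Set.powersetCard.eq_empty_iff]; exact hn
  rw [← exteriorPower.ιMulti_family_span_fixedDegree_of_span R hv, Set.range_eq_empty,
    Submodule.span_empty]

theorem exists_degreeAtLeast_eq_bot [Module.Finite R M] : ∃ k, degreeAtLeast R M k = ⊥ := by
  obtain ⟨N, v, hv⟩ := Module.Finite.exists_fin (R := R) (M := M)
  exact ⟨N + 1, iSup_eq_bot.2 fun i => exteriorPower_eq_bot_of_card_lt_s12 hv (by simp; omega)⟩

theorem isNilpotent_of_mem_degreeAtLeast_one [Module.Finite R M] {x : ExteriorAlgebra R M}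
    (hx : x ∈ degreeAtLeast R M 1) : IsNilpotent x := by
  obtain ⟨k, hk⟩ := exists_degreeAtLeast_eq_bot (R := R) (M := M)
  have := pow_degreeAtLeast_one_le k (Submodule.pow_mem_pow _ hx k)
  rw [hk, Submodule.mem_bot] at this
  exact ⟨k, this⟩

theorem mul_mul_apply_mem_evenPart {l m n o : Type*} [Fintype m] [Fintype n]
    {A : Matrix l m (ExteriorAlgebra R M)} {B : Matrix m n (ExteriorAlgebra R M)}
    {C : Matrix n o (ExteriorAlgebra R M)} (hA : ∀ i j, A i j ∈ oddPart R M)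
    (hB : ∀ i j, B i j ∈ evenPart R M) (hC : ∀ i j, C i j ∈ oddPart R M) (i : l) (j : o) :
    (A * B * C) i j ∈ evenPart R M := by
  simp only [evenPart_eq_evenOdd_zero, oddPart_eq_evenOdd_one] at hA hB hC ⊢
  exact Matrix.mul_apply_mem_graded (Matrix.mul_apply_mem_graded hA hB) hC i j

theorem isNilpotent_mul_apply_of_mem_oddPart [Module.Finite R M] {l m n : Type*} [Fintype m]
    (A : Matrix l m (ExteriorAlgebra R M)) {C : Matrix m n (ExteriorAlgebra R M)}
    (hC : ∀ i j, C i j ∈ oddPart R M) (i : l) (j : n) : IsNilpotent ((A * C) i j) :=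
  isNilpotent_of_mem_degreeAtLeast_one <| Submodule.sum_mem _ fun k _ =>
    mul_mem_degreeAtLeast_one _ (oddPart_le_degreeAtLeast_one (hC k j))

end ExteriorAlgebra

theorem Matrix.exists_map_val_eq {R A : Type*} [CommSemiring R] [Semiring A] [Algebra R A]
    {S : Subalgebra R A} {m n : Type*} {P : Matrix m n A} (hP : ∀ i j, P i j ∈ S) :
    ∃ P' : Matrix m n S, P'.map S.val = P :=
  ⟨.of fun i j => ⟨P i j, hP i j⟩, rfl⟩

theorem Matrix.isUnit_det_of_map_mul_eq_one {S A F n : Type*} [CommRing S] [Ring A]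
    [FunLike F S A] [RingHomClass F S A] [Fintype n] [DecidableEq n] {f : F}
    (hf : Function.Injective f) {P Q : Matrix n n S} (h : P.map f * Q.map f = 1) : IsUnit P.det :=
  Matrix.isUnit_det_of_right_inverse (B := Q) <| Matrix.map_injective hf <| by
    dsimp only
    rw [Matrix.map_mul, h, Matrix.map_one _ (map_zero f) (map_one f)]

theorem Matrix.isUnit_det_sub_of_isNilpotent {A n : Type*} [CommRing A] [Fintype n]
    [DecidableEq n] {P N : Matrix n n A} (hP : IsUnit P.det) (hN : ∀ i j, IsNilpotent (N i j)) :
    IsUnit (P - N).det := by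
  let π := Ideal.Quotient.mk (nilradical A)
  have hπN : π.mapMatrix N = 0 := by
    ext i j
    exact Ideal.Quotient.eq_zero_iff_mem.2 (mem_nilradical.2 (hN i j))
  have hdiff : IsNilpotent ((P - N).det - P.det) := by
    rw [← mem_nilradical, ← Ideal.Quotient.eq_zero_iff_mem, map_sub, RingHom.map_det,
      RingHom.map_det, map_sub, hπN, sub_zero, sub_self]
  simpa using hdiff.isUnit_add_right_of_commute hP (Commute.all _ _)

theorem detLeibniz_map {S Λ F : Type*} [CommRing S] [Ring Λ] [FunLike F S Λ]
    [RingHomClass F S Λ] (f : F) {k : ℕ} (N : Matrix (Fin k) (Fin k) S) :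
    detLeibniz (N.map f) = f N.det := by
  simp only [detLeibniz, Matrix.det_apply, map_sum, Units.smul_def, map_zsmul, Matrix.map_apply,
    ← List.prod_ofFn, map_list_prod, List.map_ofFn]
  rfl

theorem berezinian_isUnit_general (R : Type*) [CommRing R] (NN m n : ℕ)
    (p p' : Matrix (Fin m) (Fin m) (ExteriorAlgebra R (Fin NN → R)))
    (q : Matrix (Fin m) (Fin n) (ExteriorAlgebra R (Fin NN → R)))
    (r : Matrix (Fin n) (Fin m) (ExteriorAlgebra R (Fin NN → R)))
    (s s' : Matrix (Fin n) (Fin n) (ExteriorAlgebra R (Fin NN → R)))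
    (hp : ∀ i j, p i j ∈ evenPart R (Fin NN → R))
    (hp' : ∀ i j, p' i j ∈ evenPart R (Fin NN → R))
    (hs : ∀ i j, s i j ∈ evenPart R (Fin NN → R))
    (hs' : ∀ i j, s' i j ∈ evenPart R (Fin NN → R))
    (hq : ∀ i j, q i j ∈ oddPart R (Fin NN → R))
    (hr : ∀ i j, r i j ∈ oddPart R (Fin NN → R))
    (hpp' : p * p' = 1)
    (hss' : s * s' = 1) :
    IsUnit (detLeibniz (p - q * s' * r)) ∧
    IsUnit (detLeibniz (p - q * s' * r) * Ring.inverse (detLeibniz s)) := by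
  have central {x} (hx : x ∈ evenPart R (Fin NN → R)) :=
    ExteriorAlgebra.mem_center_of_mem_evenPart hx
  obtain ⟨pZ, rfl⟩ := Matrix.exists_map_val_eq fun i j => central (hp i j)
  obtain ⟨p'Z, rfl⟩ := Matrix.exists_map_val_eq fun i j => central (hp' i j)
  obtain ⟨sZ, rfl⟩ := Matrix.exists_map_val_eq fun i j => central (hs i j)
  obtain ⟨s'Z, rfl⟩ := Matrix.exists_map_val_eq fun i j => central (hs' i j)
  obtain ⟨YZ, hYZ⟩ := Matrix.exists_map_val_eq fun i j => central
    (ExteriorAlgebra.mul_mul_apply_mem_evenPart hq hs' hr i j)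
  have hpZ : IsUnit pZ.det := Matrix.isUnit_det_of_map_mul_eq_one Subtype.val_injective hpp'
  have hsZ : IsUnit sZ.det := Matrix.isUnit_det_of_map_mul_eq_one Subtype.val_injective hss'
  have hYZ_nil (i j) : IsNilpotent (YZ i j) := by
    rw [← IsNilpotent.map_iff (f := Subalgebra.val _) Subtype.val_injective,
      ← Matrix.map_apply (M := YZ) (f := Subalgebra.val _), hYZ]
    exact ExteriorAlgebra.isNilpotent_mul_apply_of_mem_oddPart _ hr i j
  have hDZ : IsUnit (pZ - YZ).det := Matrix.isUnit_det_sub_of_isNilpotent hpZ hYZ_nil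
  rw [← hYZ, ← Matrix.map_sub _ (map_sub _), detLeibniz_map, detLeibniz_map]
  exact ⟨hDZ.map _, (hDZ.map _).mul (hsZ.map _).ringInverse⟩

/-- The Berezinian of an invertible supermatrix is a unit (Example 3.3 of the paper): if
`g = (p q; r s)` has even diagonal blocks `p, s` invertible over the commutative even
subring (with even inverses `p', s'`) and odd off-diagonal blocks, then
`det(p − q·s⁻¹·r)` is a unit, and hence `Ber(g) = det(p − q·s⁻¹·r)·(det s)⁻¹` is a unit
of the Grassmann algebra. -/
theorem berezinian_isUnit (R : Type*) [CommRing R] [Nontrivial R] (NN m n : ℕ)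
    (hm : 1 ≤ m) (hn : 1 ≤ n)
    (p p' : Matrix (Fin m) (Fin m) (ExteriorAlgebra R (Fin NN → R)))
    (q : Matrix (Fin m) (Fin n) (ExteriorAlgebra R (Fin NN → R)))
    (r : Matrix (Fin n) (Fin m) (ExteriorAlgebra R (Fin NN → R)))
    (s s' : Matrix (Fin n) (Fin n) (ExteriorAlgebra R (Fin NN → R)))
    (hp : ∀ i j, p i j ∈ evenPart R (Fin NN → R))
    (hp' : ∀ i j, p' i j ∈ evenPart R (Fin NN → R))
    (hs : ∀ i j, s i j ∈ evenPart R (Fin NN → R))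
    (hs' : ∀ i j, s' i j ∈ evenPart R (Fin NN → R))
    (hq : ∀ i j, q i j ∈ oddPart R (Fin NN → R))
    (hr : ∀ i j, r i j ∈ oddPart R (Fin NN → R))
    (hpp' : p * p' = 1) (hp'p : p' * p = 1)
    (hss' : s * s' = 1) (hs's : s' * s = 1) :
    IsUnit (detLeibniz (p - q * s' * r)) ∧
    IsUnit (detLeibniz (p - q * s' * r) * Ring.inverse (detLeibniz s)) :=
  berezinian_isUnit_general R NN m n p p' q r s s' hp hp' hs hs' hq hr hpp' hss'
end
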